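/- (Rockafellar–Uryasev) Let S be an integrable real random variable with density f and let \gamma \in (0,1). Define U(a) = a + (1-\gamma)^{-1} E[(S - a)^+]. Then U is convex on \mathbb{R}, attains its minimum at a = VaR_\gamma(S) (the \gamma-quantile of S), and the minimum value equals TVaR_\gamma(S) = E[S | S > VaR_\gamma(S)]. -/

import Mathlib

/-!
The tail function `g a = E[(S - a)⁺]` is convex as an integral of the convex functions
`a ↦ (s - a)⁺`, and the pointwise bound `(s - b)⁺ ≥ (s - a)⁺ - (b - a) 𝟙{s > a}` integrates to the
subgradient inequality `g b ≥ g a - (b - a) P(S > a)`. Continuity of the distribution function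
gives `F VaR = γ`, i.e. `P(S > VaR) = 1 - γ`, so `U` has subgradient `1 - (1 - γ)⁻¹ P(S > VaR) = 0`
at `VaR`, which is therefore a minimiser. Finally `(S - VaR)⁺ = (S - VaR) 𝟙{S > VaR}`, which turns
`U VaR` into `(1 - γ)⁻¹ E[S; S > VaR] = E[S | S > VaR]`.
-/

open MeasureTheory ProbabilityTheory Set

lemma convexOn_max_sub_zero (x : ℝ) : ConvexOn ℝ univ fun a => max (x - a) 0 :=
  ((convexOn_const x convex_univ).sub (concaveOn_id convex_univ)).sup (convexOn_const 0 convex_univ)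

lemma cdf_csInf_setOf_le_eq (μ : Measure ℝ) [IsProbabilityMeasure μ] (hcont : Continuous (cdf μ))
    {γ : ℝ} (hγ : γ ∈ Ioo 0 1) : cdf μ (sInf {a | γ ≤ cdf μ a}) = γ := by
  obtain ⟨x, hx⟩ := ((tendsto_cdf_atBot μ).eventually_lt_const hγ.1).exists
  obtain ⟨y, hy⟩ := ((tendsto_cdf_atTop μ).eventually_const_lt hγ.2).exists
  have hbdd : BddBelow {a | γ ≤ cdf μ a} := ⟨x, fun a ha =>
    (monotone_cdf μ).reflect_lt (hx.trans_le ha) |>.le⟩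
  obtain ⟨c, hc⟩ := intermediate_value_univ x y hcont ⟨hx.le, hy.le⟩
  refine le_antisymm ?_ ?_
  · exact (monotone_cdf μ (csInf_le hbdd hc.ge)).trans hc.le
  · exact (isClosed_le continuous_const hcont).csInf_mem ⟨c, hc.ge⟩ hbdd

section

variable {Ω : Type*} [MeasurableSpace Ω] {P : Measure Ω} [IsFiniteMeasure P] {S : Ω → ℝ}

lemma integrable_max_sub_zero (hSint : Integrable S P) (a : ℝ) :
    Integrable (fun ω => max (S ω - a) 0) P :=
  (hSint.sub (integrable_const a)).pos_part

lemma integral_max_sub_zero_sub_le (hS : Measurable S) (hSint : Integrable S P) (a b : ℝ) :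
    ∫ ω, max (S ω - a) 0 ∂P - (b - a) * P.real {ω | a < S ω} ≤ ∫ ω, max (S ω - b) 0 ∂P := by
  have hA : MeasurableSet {ω | a < S ω} := hS measurableSet_Ioi
  have hind : Integrable ({ω | a < S ω}.indicator fun _ => b - a) P :=
    (integrable_const _).indicator hA
  rw [mul_comm, ← smul_eq_mul, ← integral_indicator_const _ hA,
    ← integral_sub (integrable_max_sub_zero hSint a) hind]
  refine integral_mono ((integrable_max_sub_zero hSint a).sub hind)
    (integrable_max_sub_zero hSint b) fun ω => ?_
  by_cases h : a < S ω
  · simp only [indicator_of_mem (show ω ∈ {ω | a < S ω} from h), max_eq_left (sub_nonneg.2 h.le)]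
    exact (le_of_eq (by ring)).trans (le_max_left _ _)
  · simp only [indicator_of_notMem (show ω ∉ {ω | a < S ω} from h), sub_zero,
      max_eq_right (sub_nonpos.2 (not_lt.1 h))]
    exact le_max_right _ _

lemma integral_max_sub_zero_eq (hS : Measurable S) (hSint : Integrable S P) (a : ℝ) :
    ∫ ω, max (S ω - a) 0 ∂P = ∫ ω in {ω | a < S ω}, S ω ∂P - a * P.real {ω | a < S ω} := by
  have hA : MeasurableSet {ω | a < S ω} := hS measurableSet_Ioi
  have hpos : (fun ω => max (S ω - a) 0) = {ω | a < S ω}.indicator fun ω => S ω - a := by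
    funext ω
    by_cases h : a < S ω
    · rw [indicator_of_mem (show ω ∈ {ω | a < S ω} from h), max_eq_left (sub_nonneg.2 h.le)]
    · rw [indicator_of_notMem (show ω ∉ {ω | a < S ω} from h),
        max_eq_right (sub_nonpos.2 (not_lt.1 h))]
  rw [hpos, integral_indicator hA, integral_sub hSint.integrableOn (integrableOn_const),
    setIntegral_const, smul_eq_mul, mul_comm]

end

theorem rockafellar_uryasev_general
    {Ω : Type*} [MeasurableSpace Ω] (P : Measure Ω) [IsProbabilityMeasure P]
    (S : Ω → ℝ) (hS : Measurable S) (hSint : Integrable S P)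
    (γ : ℝ) (hγ : γ ∈ Set.Ioo (0 : ℝ) 1)
    (F : ℝ → ℝ) (hF : ∀ s, F s = (P {ω | S ω ≤ s}).toReal)
    (hFcont : Continuous F)
    (VaR : ℝ) (hVaR : VaR = sInf {a : ℝ | γ ≤ F a})
    (U : ℝ → ℝ)
    (hU : ∀ a, U a = a + (1 - γ)⁻¹ * ∫ ω, max (S ω - a) 0 ∂P) :
    ConvexOn ℝ Set.univ U ∧
      (∀ a : ℝ, U VaR ≤ U a) ∧
      U VaR = ∫ ω, S ω ∂(P[|{ω | VaR < S ω}]) := by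
  have : IsProbabilityMeasure (P.map S) := Measure.isProbabilityMeasure_map hS.aemeasurable
  have hFcdf : F = cdf (P.map S) := by
    funext s
    rw [hF, cdf_eq_real, measureReal_def, Measure.map_apply hS measurableSet_Iic]
    rfl
  have hFVaR : F VaR = γ := by
    rw [hVaR, hFcdf]
    exact cdf_csInf_setOf_le_eq _ (hFcdf ▸ hFcont) hγ
  have htail : P.real {ω | VaR < S ω} = 1 - γ := by
    rw [← hFVaR, hF, ← measureReal_def,
      ← probReal_compl_eq_one_sub (measurableSet_le hS measurable_const)]
    simp only [compl_ofPred, not_le]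
  have hc : 0 < 1 - γ := sub_pos.2 hγ.2
  refine ⟨?_, fun a => ?_, ?_⟩
  · rw [show U = fun a => id a + (1 - γ)⁻¹ • ∫ ω, max (S ω - a) 0 ∂P from funext hU]
    exact (convexOn_id convex_univ).add <| ConvexOn.smul (inv_nonneg.2 hc.le) <|
      integral_convexOn_of_integrand_ae convex_univ
        (ae_of_all _ fun ω => convexOn_max_sub_zero (S ω))
        fun a _ => integrable_max_sub_zero hSint a
  · have h := integral_max_sub_zero_sub_le hS hSint VaR a
    rw [htail] at h
    calc U VaR = a + (1 - γ)⁻¹ * (∫ ω, max (S ω - VaR) 0 ∂P - (a - VaR) * (1 - γ)) := by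
          rw [hU]; field_simp; ring
      _ ≤ U a := by rw [hU]; gcongr
  · rw [hU, integral_max_sub_zero_eq hS hSint, htail, ProbabilityTheory.cond,
      integral_smul_measure, ENNReal.toReal_inv, ← measureReal_def, htail, smul_eq_mul]
    field_simp
    ring

/-- Rockafellar–Uryasev: for integrable `S` with continuous strictly increasing
distribution function and `γ ∈ (0,1)`, the function
`U(a) = a + (1-γ)⁻¹ E[(S-a)⁺]` is convex, attains its minimum at `VaR_γ(S)`
(the `γ`-quantile), and its minimum value is `TVaR_γ(S) = E[S | S > VaR_γ(S)]`. -/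
theorem rockafellar_uryasev
    {Ω : Type*} [MeasurableSpace Ω] (P : Measure Ω) [IsProbabilityMeasure P]
    (S : Ω → ℝ) (hS : Measurable S) (hSint : Integrable S P)
    (γ : ℝ) (hγ : γ ∈ Set.Ioo (0 : ℝ) 1)
    (F : ℝ → ℝ) (hF : ∀ s, F s = (P {ω | S ω ≤ s}).toReal)
    (hFcont : Continuous F) (hFmono : StrictMono F)
    (VaR : ℝ) (hVaR : VaR = sInf {a : ℝ | γ ≤ F a})
    (U : ℝ → ℝ)
    (hU : ∀ a, U a = a + (1 - γ)⁻¹ * ∫ ω, max (S ω - a) 0 ∂P) :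
    ConvexOn ℝ Set.univ U ∧
      (∀ a : ℝ, U VaR ≤ U a) ∧
      U VaR = ∫ ω, S ω ∂(P[|{ω | VaR < S ω}]) :=
  rockafellar_uryasev_general P S hS hSint γ hγ F hF hFcont VaR hVaR U hU
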